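/- Let α > 0 and t be real numbers with |t| < α. Then the series Σ_{k=2}^∞ (−1)^k · ζ(k, α) · t^(k−1) converges, where ζ(k, α) = Σ_{n=0}^∞ (n + α)^(−k) is the Hurwitz zeta value, and its sum equals ψ(α + t) − ψ(α), where ψ denotes the digamma function ψ(s) = Γ'(s)/Γ(s) of the real Gamma function Γ. -/

import Mathlib

open Filter Set

/-- The digamma function ψ(t) = Γ'(t)/Γ(t) of the real Gamma function. -/
noncomputable def digamma (t : ℝ) : ℝ := deriv Real.Gamma t / Real.Gamma t

/-- The Hurwitz zeta value ζ(k, α) = Σ_{n=0}^∞ (n + α)^(−k) for an integer k and α > 0. -/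
noncomputable def hurwitzZetaValue (k : ℕ) (α : ℝ) : ℝ := ∑' n : ℕ, 1 / ((n : ℝ) + α) ^ k

/-!
Log-convexity of `Γ` (Bohr–Mollerup) squeezes `ψ x` between `log (x - 1)` and `log x`, so
`ψ (y + N) - ψ (x + N) → 0`; together with `ψ (x + 1) = ψ x + 1 / x` this telescopes to
`ψ y - ψ x = ∑ₙ (1 / (n + x) - 1 / (n + y))`. For `y = α + t` each summand expands as a geometric
series in `t / (n + α)`, and the resulting double series converges absolutely when `|t| < α`,
so it may be summed the other way round, giving the Hurwitz zeta values.
-/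

open Real Topology

lemma differentiableAt_log_Gamma {x : ℝ} (hx : 0 < x) : DifferentiableAt ℝ (log ∘ Gamma) x :=
  (differentiableAt_Gamma fun m => ne_of_gt (by linarith)).log (Gamma_pos_of_pos hx).ne'

lemma digamma_eq_deriv_log_Gamma {x : ℝ} (hx : 0 < x) : digamma x = deriv (log ∘ Gamma) x := by
  rw [digamma, Function.comp_def,
    deriv.log (differentiableAt_Gamma fun m => ne_of_gt (by linarith)) (Gamma_pos_of_pos hx).ne']

lemma digamma_add_one {x : ℝ} (hx : 0 < x) : digamma (x + 1) = digamma x + x⁻¹ := by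
  have hrec : log ∘ Gamma =ᶠ[𝓝 x] fun y => (log ∘ Gamma) (y + 1) - log y := by
    filter_upwards [eventually_gt_nhds hx] with y hy
    simp [Gamma_add_one hy.ne', log_mul hy.ne' (Gamma_pos_of_pos hy).ne']
  have hd := hrec.deriv_eq
  rw [deriv_fun_sub (differentiableAt_comp_add_const.2 (differentiableAt_log_Gamma (by linarith)))
    (differentiableAt_log hx.ne'), deriv_comp_add_const, deriv_log] at hd
  rw [digamma_eq_deriv_log_Gamma hx, digamma_eq_deriv_log_Gamma (by linarith), hd]
  ring

lemma digamma_add_nat {x : ℝ} (hx : 0 < x) (N : ℕ) :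
    digamma (x + N) = digamma x + ∑ n ∈ Finset.range N, (x + n)⁻¹ := by
  induction N with
  | zero => simp
  | succ N ih =>
    rw [Nat.cast_succ, ← add_assoc, digamma_add_one (by positivity), ih, Finset.sum_range_succ,
      add_assoc]

lemma digamma_le_log {x : ℝ} (hx : 0 < x) : digamma x ≤ log x := by
  have h := convexOn_log_Gamma.deriv_le_slope (mem_Ioi.2 hx) (mem_Ioi.2 (by linarith : 0 < x + 1))
    (lt_add_one x) (differentiableAt_log_Gamma hx)
  rwa [← digamma_eq_deriv_log_Gamma hx, slope_def_field, add_sub_cancel_left, div_one,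
    Function.comp_apply, Function.comp_apply, Gamma_add_one hx.ne',
    log_mul hx.ne' (Gamma_pos_of_pos hx).ne', add_sub_cancel_right] at h

lemma log_sub_one_le_digamma {x : ℝ} (hx : 1 < x) : log (x - 1) ≤ digamma x := by
  have hx0 : 0 < x - 1 := by linarith
  have h := convexOn_log_Gamma.slope_le_deriv (mem_Ioi.2 hx0) (mem_Ioi.2 (by linarith : 0 < x))
    (sub_one_lt x) (differentiableAt_log_Gamma (by linarith))
  rwa [← digamma_eq_deriv_log_Gamma (by linarith), slope_def_field, sub_sub_cancel, div_one,
    Function.comp_apply, Function.comp_apply, ← sub_add_cancel x 1, Gamma_add_one hx0.ne',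
    log_mul hx0.ne' (Gamma_pos_of_pos hx0).ne', sub_add_cancel, add_sub_cancel_right] at h

lemma tendsto_digamma_sub_log_atTop : Tendsto (fun x => digamma x - log x) atTop (𝓝 0) := by
  refine tendsto_of_tendsto_of_tendsto_of_le_of_le' (tendsto_log_comp_add_sub_log (-1))
    tendsto_const_nhds ?_ ?_
  · filter_upwards [eventually_gt_atTop 1] with x hx
    simpa [← sub_eq_add_neg] using log_sub_one_le_digamma hx
  · filter_upwards [eventually_gt_atTop 0] with x hx
    simpa using digamma_le_log hx

lemma tendsto_digamma_add_nat_sub_digamma_add_nat (x y : ℝ) :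
    Tendsto (fun N : ℕ => digamma (y + N) - digamma (x + N)) atTop (𝓝 0) := by
  have hshift (z : ℝ) : Tendsto (fun N : ℕ => z + N) atTop atTop :=
    tendsto_atTop_add_const_left _ z tendsto_natCast_atTop_atTop
  have hlog := (tendsto_log_comp_add_sub_log (y - x)).comp (hshift x)
  have hsum := ((tendsto_digamma_sub_log_atTop.comp (hshift y)).sub
    (tendsto_digamma_sub_log_atTop.comp (hshift x))).add hlog
  simp only [sub_zero, add_zero] at hsum
  refine hsum.congr fun N => ?_
  simp only [Function.comp_apply]
  ring_nf

theorem hasSum_digamma_sub_digamma {x y : ℝ} (hx : 0 < x) (hy : 0 < y) :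
    HasSum (fun n : ℕ => ((n : ℝ) + x)⁻¹ - ((n : ℝ) + y)⁻¹) (digamma y - digamma x) := by
  wlog hxy : x ≤ y generalizing x y
  · simpa using (this hy hx (le_of_not_ge hxy)).neg
  have hpartial (N : ℕ) : ∑ n ∈ Finset.range N, (((n : ℝ) + x)⁻¹ - ((n : ℝ) + y)⁻¹) =
      digamma y - digamma x - (digamma (y + N) - digamma (x + N)) := by
    simp only [Finset.sum_sub_distrib, digamma_add_nat hx, digamma_add_nat hy, add_comm _ x,
      add_comm _ y]
    ring
  rw [hasSum_iff_tendsto_nat_of_nonneg fun n => sub_nonneg.2 <|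
    inv_anti₀ (by positivity) (by linarith)]
  simpa [hpartial] using
    (tendsto_digamma_add_nat_sub_digamma_add_nat x y).const_sub (digamma y - digamma x)

lemma hasSum_hurwitzZetaValue {k : ℕ} (hk : 1 < k) {α : ℝ} (hα : 0 < α) :
    HasSum (fun n : ℕ => 1 / ((n : ℝ) + α) ^ k) (hurwitzZetaValue k α) := by
  refine (((summable_one_div_nat_add_rpow α k).2 (by exact_mod_cast hk)).congr fun n => ?_).hasSum
  rw [abs_of_pos (by positivity), rpow_natCast]

lemma hasSum_alternating_geometric {K t : ℝ} (ht : |t| < K) :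
    HasSum (fun m : ℕ => (-1) ^ (m + 2) * t ^ (m + 1) / K ^ (m + 2)) (K⁻¹ - (K + t)⁻¹) := by
  have hK : 0 < K := (abs_nonneg t).trans_lt ht
  have hKt : 0 < K + t := by linarith [neg_abs_le t]
  have hratio : |-t / K| < 1 := by
    rwa [abs_div, abs_neg, abs_of_pos hK, div_lt_one hK]
  have hterm : (fun m : ℕ => (-1) ^ (m + 2) * t ^ (m + 1) / K ^ (m + 2)) =
      fun m => t / K ^ 2 * (-t / K) ^ m := by
    ext m
    rw [div_pow, neg_pow, pow_add (-1 : ℝ), pow_add K]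
    field_simp
    ring
  have hvalue : K⁻¹ - (K + t)⁻¹ = t / K ^ 2 * (1 - -t / K)⁻¹ := by
    rw [neg_div, sub_neg_eq_add, one_add_div hK.ne']
    field_simp
    ring
  rw [hterm, hvalue]
  exact (hasSum_geometric_of_abs_lt_one hratio).mul_left _

lemma summable_alternating_double {α t : ℝ} (ht : |t| < α) :
    Summable fun p : ℕ × ℕ =>
      (-1 : ℝ) ^ (p.1 + 2) * t ^ (p.1 + 1) / ((p.2 : ℝ) + α) ^ (p.1 + 2) := by
  have hα : 0 < α := (abs_nonneg t).trans_lt ht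
  have hgeom : Summable fun m : ℕ => (|t| / α) ^ m :=
    summable_geometric_of_lt_one (by positivity) ((div_lt_one hα).2 ht)
  have hzeta : Summable fun n : ℕ => |t| * (1 / ((n : ℝ) + α) ^ 2) :=
    (hasSum_hurwitzZetaValue one_lt_two hα).summable.mul_left _
  refine (hgeom.mul_of_nonneg hzeta (fun _ => by positivity) fun _ => by positivity)
    |>.of_norm_bounded fun ⟨m, n⟩ => ?_
  have hn : α ≤ (n : ℝ) + α := le_add_of_nonneg_left n.cast_nonneg
  calc ‖(-1 : ℝ) ^ (m + 2) * t ^ (m + 1) / ((n : ℝ) + α) ^ (m + 2)‖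
      = |t| ^ (m + 1) / (((n : ℝ) + α) ^ m * ((n : ℝ) + α) ^ 2) := by
        simp only [norm_div, norm_mul, norm_pow, norm_neg, norm_one, one_pow, one_mul,
          Real.norm_eq_abs, abs_of_pos (hα.trans_le hn), pow_add _ m 2]
    _ ≤ |t| ^ (m + 1) / (α ^ m * ((n : ℝ) + α) ^ 2) := by gcongr
    _ = (|t| / α) ^ m * (|t| * (1 / ((n : ℝ) + α) ^ 2)) := by
        rw [div_pow]
        field_simp
        ring

theorem zeta_stmt_7_general (α t : ℝ) (ht : |t| < α) :
    HasSum (fun k : ℕ => (-1 : ℝ) ^ (k + 2) * hurwitzZetaValue (k + 2) α * t ^ (k + 1))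
      (digamma (α + t) - digamma α) := by
  have hα : 0 < α := (abs_nonneg t).trans_lt ht
  have hαt : 0 < α + t := by linarith [neg_abs_le t]
  have hF := (summable_alternating_double ht).hasSum
  have hrows : HasSum (fun n : ℕ => ((n : ℝ) + α)⁻¹ - ((n : ℝ) + (α + t))⁻¹) _ :=
    ((Equiv.prodComm ℕ ℕ).hasSum_iff.2 hF).prod_fiberwise fun n => by
      simpa [add_assoc] using hasSum_alternating_geometric (K := (n : ℝ) + α)
        (ht.trans_le (le_add_of_nonneg_left n.cast_nonneg))
  have hcols : HasSum
      (fun m : ℕ => (-1 : ℝ) ^ (m + 2) * hurwitzZetaValue (m + 2) α * t ^ (m + 1)) _ :=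
    hF.prod_fiberwise fun m => by
      simpa [mul_right_comm _ _ (t ^ (m + 1)), div_eq_mul_inv] using
        (hasSum_hurwitzZetaValue (by omega : 1 < m + 2) hα).mul_left
          ((-1 : ℝ) ^ (m + 2) * t ^ (m + 1))
  rwa [hrows.unique (hasSum_digamma_sub_digamma hα hαt)] at hcols

theorem zeta_stmt_7 (α t : ℝ) (hα : 0 < α) (ht : |t| < α) :
    HasSum (fun k : ℕ => (-1 : ℝ) ^ (k + 2) * hurwitzZetaValue (k + 2) α * t ^ (k + 1))
      (digamma (α + t) - digamma α) :=
  zeta_stmt_7_general α t ht
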